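/- Let A ∈ ℝ^{n×n}, B ∈ ℝ^{n×m}, T₀ > 0, and W = ∫₀^{T₀} e^{-At} B Bᵀ e^{-Aᵀt} dt. Then (A - B Bᵀ W^{-1}) W + W (A - B Bᵀ W^{-1})ᵀ = -B Bᵀ - e^{-A T₀} B Bᵀ e^{-Aᵀ T₀}, assuming W is invertible. -/

import Mathlib

open Matrix MeasureTheory

noncomputable def gramian {n m : ℕ} (A : Matrix (Fin n) (Fin n) ℝ)
    (B : Matrix (Fin n) (Fin m) ℝ) (T₀ : ℝ) : Matrix (Fin n) (Fin n) ℝ :=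
  fun i j => ∫ t in (0:ℝ)..T₀,
    (NormedSpace.exp ((-t) • A) * B * Bᵀ * NormedSpace.exp ((-t) • Aᵀ)) i j

/-! The integrand `M t = e^{-At} B Bᵀ e^{-Aᵀt}` satisfies `M' = -(A M + M Aᵀ)`, so integrating over
`[0, T₀]` gives the Lyapunov equation `A W + W Aᵀ = B Bᵀ - M T₀`. Substituting the feedback
`A - B Bᵀ W⁻¹` and using the symmetry of `W` and `B Bᵀ` only subtracts `2 B Bᵀ`. -/

open NormedSpace

section ExpSandwich

variable {𝔸 : Type*} [NormedRing 𝔸] [NormedAlgebra ℝ 𝔸] [CompleteSpace 𝔸]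

theorem hasDerivAt_exp_smul_mul_mul_exp_smul (X C Y : 𝔸) (t : ℝ) :
    HasDerivAt (fun s : ℝ => exp (s • X) * C * exp (s • Y))
      (X * (exp (t • X) * C * exp (t • Y)) + exp (t • X) * C * exp (t • Y) * Y) t :=
  (((hasDerivAt_exp_smul_const' X t).mul_const C).mul
    (hasDerivAt_exp_smul_const Y t)).congr_deriv (by noncomm_ring)

theorem continuous_exp_smul_mul_mul_exp_smul (X C Y : 𝔸) :
    Continuous fun t : ℝ => exp (t • X) * C * exp (t • Y) :=
  continuous_iff_continuousAt.2 fun t => (hasDerivAt_exp_smul_mul_mul_exp_smul X C Y t).continuousAt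

theorem mul_integral_add_integral_mul_exp_smul (X C Y : 𝔸) (a b : ℝ) :
    X * (∫ t in a..b, exp (t • X) * C * exp (t • Y))
      + (∫ t in a..b, exp (t • X) * C * exp (t • Y)) * Y
    = exp (b • X) * C * exp (b • Y) - exp (a • X) * C * exp (a • Y) := by
  set M : ℝ → 𝔸 := fun t => exp (t • X) * C * exp (t • Y)
  have hM : Continuous M := continuous_exp_smul_mul_mul_exp_smul X C Y
  have hMint : IntervalIntegrable M volume a b := hM.intervalIntegrable a b
  have hleft : ∫ t in a..b, X * M t = X * ∫ t in a..b, M t :=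
    (ContinuousLinearMap.mul ℝ 𝔸 X).intervalIntegral_comp_comm hMint
  have hright : ∫ t in a..b, M t * Y = (∫ t in a..b, M t) * Y :=
    ((ContinuousLinearMap.mul ℝ 𝔸).flip Y).intervalIntegral_comp_comm hMint
  rw [← hleft, ← hright, ← intervalIntegral.integral_add
    ((by fun_prop : Continuous fun t => X * M t).intervalIntegrable a b)
    ((by fun_prop : Continuous fun t => M t * Y).intervalIntegrable a b)]
  exact intervalIntegral.integral_eq_sub_of_hasDerivAt
    (fun t _ => hasDerivAt_exp_smul_mul_mul_exp_smul X C Y t)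
    ((by fun_prop : Continuous fun t => X * M t + M t * Y).intervalIntegrable a b)

end ExpSandwich

theorem Matrix.lyapunov_sub_mul_nonsing_inv {ι R : Type*} [Fintype ι] [DecidableEq ι] [CommRing R]
    {A C W E : Matrix ι ι R} (hW : IsUnit W.det) (hWs : W.IsSymm) (hC : C.IsSymm)
    (h : A * W + W * Aᵀ = C - E) :
    (A - C * W⁻¹) * W + W * (A - C * W⁻¹)ᵀ = -C - E := by
  have hT : (A - C * W⁻¹)ᵀ = Aᵀ - W⁻¹ * C := by
    rw [transpose_sub, transpose_mul, transpose_nonsing_inv, hWs.eq, hC.eq]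
  calc (A - C * W⁻¹) * W + W * (A - C * W⁻¹)ᵀ
      = (A * W + W * Aᵀ) - C * (W⁻¹ * W) - (W * W⁻¹) * C := by rw [hT]; noncomm_ring
    _ = -C - E := by rw [h, nonsing_inv_mul _ hW, mul_nonsing_inv _ hW, mul_one, one_mul]; abel

section MatrixIntegral

open scoped Matrix.Norms.L2Operator

theorem Matrix.intervalIntegral_apply {ι : Type*} [Fintype ι] [DecidableEq ι]
    {f : ℝ → Matrix ι ι ℝ} {a b : ℝ} (hf : IntervalIntegrable f volume a b) (i j : ι) :
    (∫ t in a..b, f t) i j = ∫ t in a..b, f t i j :=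
  ((entryLinearMap ℝ ℝ i j).toContinuousLinearMap.intervalIntegral_comp_comm hf).symm

theorem gramian_eq_intervalIntegral {n m : ℕ} (A : Matrix (Fin n) (Fin n) ℝ)
    (B : Matrix (Fin n) (Fin m) ℝ) (T₀ : ℝ) :
    gramian A B T₀ = ∫ t in (0:ℝ)..T₀, exp (t • -A) * (B * Bᵀ) * exp (t • -Aᵀ) := by
  ext i j
  rw [Matrix.intervalIntegral_apply]
  · simp only [gramian, neg_smul, smul_neg, Matrix.mul_assoc]
  · exact (continuous_exp_smul_mul_mul_exp_smul (-A) (B * Bᵀ) (-Aᵀ)).intervalIntegrable _ _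

theorem mul_gramian_add_gramian_mul_transpose {n m : ℕ} (A : Matrix (Fin n) (Fin n) ℝ)
    (B : Matrix (Fin n) (Fin m) ℝ) (T₀ : ℝ) :
    A * gramian A B T₀ + gramian A B T₀ * Aᵀ
      = B * Bᵀ - exp ((-T₀) • A) * B * Bᵀ * exp ((-T₀) • Aᵀ) := by
  have h := mul_integral_add_integral_mul_exp_smul (-A) (B * Bᵀ) (-Aᵀ) 0 T₀
  rw [← gramian_eq_intervalIntegral, zero_smul, zero_smul, exp_zero, Matrix.one_mul,
    Matrix.mul_one, smul_neg, smul_neg, ← neg_smul, ← neg_smul] at h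
  rw [Matrix.mul_assoc _ B, ← neg_sub, ← h]
  noncomm_ring

end MatrixIntegral

theorem gramian_isSymm {n m : ℕ} (A : Matrix (Fin n) (Fin n) ℝ)
    (B : Matrix (Fin n) (Fin m) ℝ) (T₀ : ℝ) : (gramian A B T₀).IsSymm := by
  ext i j
  refine intervalIntegral.integral_congr fun t _ => ?_
  rw [← transpose_apply (_ * _ * _ * _)]
  simp only [transpose_mul, transpose_transpose, ← exp_transpose, transpose_smul, Matrix.mul_assoc]

theorem gramian_lyapunov_identity_general {n m : ℕ}
    (A : Matrix (Fin n) (Fin n) ℝ) (B : Matrix (Fin n) (Fin m) ℝ)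
    (T₀ : ℝ) (hW : IsUnit (gramian A B T₀).det) :
    (A - B * Bᵀ * (gramian A B T₀)⁻¹) * gramian A B T₀
      + gramian A B T₀ * (A - B * Bᵀ * (gramian A B T₀)⁻¹)ᵀ
    = -(B * Bᵀ)
      - NormedSpace.exp ((-T₀) • A) * B * Bᵀ * NormedSpace.exp ((-T₀) • Aᵀ) :=
  lyapunov_sub_mul_nonsing_inv hW (gramian_isSymm A B T₀) (by simp [IsSymm])
    (mul_gramian_add_gramian_mul_transpose A B T₀)

theorem gramian_lyapunov_identity {n m : ℕ}
    (A : Matrix (Fin n) (Fin n) ℝ) (B : Matrix (Fin n) (Fin m) ℝ)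
    (T₀ : ℝ) (hT : 0 < T₀) (hW : IsUnit (gramian A B T₀).det) :
    (A - B * Bᵀ * (gramian A B T₀)⁻¹) * gramian A B T₀
      + gramian A B T₀ * (A - B * Bᵀ * (gramian A B T₀)⁻¹)ᵀ
    = -(B * Bᵀ)
      - NormedSpace.exp ((-T₀) • A) * B * Bᵀ * NormedSpace.exp ((-T₀) • Aᵀ) :=
  gramian_lyapunov_identity_general A B T₀ hW
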